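/- Let G be a finite simple graph whose vertex set is partitioned into three independent sets A, B, C. Suppose that (i) there exists a function h : C → {1, 2, …, 12} such that every vertex u ∈ A ∪ B having at least one neighbor in C satisfies Σ_{x ∈ N(u) ∩ C} h(x) ≢ 0 (mod 12), and (ii) the bipartite subgraph of G induced on A ∪ B admits an orientation of its edges in which every vertex has indegree at most 2. Then η(G) ≤ 36. -/

import Mathlib

/-- The sum of the values of `f` over the neighborhood of `u` in `G`. -/
noncomputable def nsum {V : Type*} [Fintype V] {M : Type*} [AddCommMonoid M]
    (G : SimpleGraph V) (f : V → M) (u : V) : M :=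
  letI := Classical.decRel G.Adj
  ∑ x ∈ G.neighborFinset u, f x

/-- `G` has an additive coloring using the labels `{1, 2, …, k}`. -/
def HasAddColoring {V : Type*} [Fintype V] (G : SimpleGraph V) (k : ℕ) : Prop :=
  ∃ f : V → ℕ, (∀ v, f v ∈ Finset.Icc 1 k) ∧
    ∀ ⦃u v : V⦄, G.Adj u v → nsum G f u ≠ nsum G f v

/-- `η(G)`: the least `k` such that `G` has an additive coloring with labels `{1, …, k}`. -/
noncomputable def eta {V : Type*} [Fintype V] (G : SimpleGraph V) : ℕ :=
  sInf {k | HasAddColoring G k}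

/-!
Colour `C` by `h`, `B` by `12 t` and `A` by `12 (4 - t)` for some `t : V → {1, 2, 3}`. Every colour
outside `C` is a multiple of 12, so a vertex of `C` has neighbourhood sum `≡ 0 (mod 12)` while, by
(i), a vertex of `A ∪ B` with a neighbour in `C` does not. For an edge `ab` with `a ∈ A`, `b ∈ B`,
independence gives `S(a) = 12 ∑_{N(a) ∩ B} t + σ(a)` and
`S(b) = 48 |N(b) ∩ A| - 12 ∑_{N(b) ∩ A} t + σ(b)`, where `σ` is the neighbourhood sum of `h`; so
`S(a) = S(b)` pins the linear form `∑_{N(a) ∩ B} t + ∑_{N(b) ∩ A} t` to one value. This form has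
nonnegative coefficients and contains both endpoints. Hence the product over all `A`–`B` edges of
(form − value) has a positive coefficient at `∏_{ab} x_{head(ab)}`, whose exponents are the
indegrees of (ii), at most 2; the Combinatorial Nullstellensatz on `{1, 2, 3}^V` then gives a `t`
avoiding every value.
-/

open MvPolynomial Finset

section NonnegCoefficients

variable {σ ι R : Type*} [CommSemiring R] [PartialOrder R] [IsOrderedRing R]

theorem MvPolynomial.coeff_prod_nonneg (s : Finset ι) (f : ι → MvPolynomial σ R)
    (hf : ∀ i ∈ s, ∀ ν, 0 ≤ coeff ν (f i)) (ν : σ →₀ ℕ) :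
    0 ≤ coeff ν (∏ i ∈ s, f i) := by
  classical
  induction s using Finset.induction_on generalizing ν with
  | empty => rw [prod_empty, coeff_one]; split_ifs <;> simp
  | insert a s ha ih =>
    rw [prod_insert ha, coeff_mul]
    exact sum_nonneg fun x _ => mul_nonneg (hf a (mem_insert_self a s) _)
      (ih (fun i hi => hf i (mem_insert_of_mem hi)) _)

theorem MvPolynomial.prod_coeff_le_coeff_prod (s : Finset ι) (f : ι → MvPolynomial σ R)
    (g : ι → σ →₀ ℕ) (hf : ∀ i ∈ s, ∀ ν, 0 ≤ coeff ν (f i)) :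
    ∏ i ∈ s, coeff (g i) (f i) ≤ coeff (∑ i ∈ s, g i) (∏ i ∈ s, f i) := by
  classical
  induction s using Finset.induction_on with
  | empty => simp
  | insert a s ha ih =>
    have hfa : ∀ ν, 0 ≤ coeff ν (f a) := hf a (mem_insert_self a s)
    have hfs : ∀ i ∈ s, ∀ ν, 0 ≤ coeff ν (f i) := fun i hi => hf i (mem_insert_of_mem hi)
    rw [prod_insert ha, prod_insert ha, sum_insert ha, coeff_mul]
    calc coeff (g a) (f a) * ∏ i ∈ s, coeff (g i) (f i)
        ≤ coeff (g a) (f a) * coeff (∑ i ∈ s, g i) (∏ i ∈ s, f i) :=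
          mul_le_mul_of_nonneg_left (ih hfs) (hfa _)
      _ ≤ _ := by
          have hmem : (g a, ∑ i ∈ s, g i) ∈ antidiagonal (g a + ∑ i ∈ s, g i) :=
            mem_antidiagonal.mpr rfl
          exact single_le_sum (f := fun x => coeff x.1 (f a) * coeff x.2 (∏ i ∈ s, f i))
            (fun x _ => mul_nonneg (hfa _) (coeff_prod_nonneg s f hfs _)) hmem

end NonnegCoefficients

theorem MvPolynomial.coeff_prod_add_C_of_isHomogeneous {σ ι R : Type*} [CommSemiring R]
    (s : Finset ι) (f : ι → MvPolynomial σ R) (hf : ∀ i ∈ s, (f i).IsHomogeneous 1)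
    (r : ι → R) {ν : σ →₀ ℕ} (hν : ν.degree = #s) :
    coeff ν (∏ i ∈ s, (f i + C (r i))) = coeff ν (∏ i ∈ s, f i) := by
  classical
  rw [prod_add, coeff_sum, sum_eq_single_of_mem s (mem_powerset_self s)]
  · simp
  · intro t hts hne
    have hts : t ⊂ s := ssubset_of_subset_of_ne (mem_powerset.mp hts) hne
    have htf : (∏ i ∈ t, f i).IsHomogeneous #t := by
      simpa using IsHomogeneous.prod t f (fun _ => 1) fun i hi => hf i (hts.subset hi)
    rw [← map_prod, mul_comm, coeff_C_mul, htf.coeff_eq_zero (hν ▸ (card_lt_card hts).ne'),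
      mul_zero]

section LinearForms

variable {σ R : Type*} [Fintype σ] [CommSemiring R]

theorem MvPolynomial.isHomogeneous_sum_C_mul_X (m : σ → R) :
    (∑ v, C (m v) * X v : MvPolynomial σ R).IsHomogeneous 1 :=
  IsHomogeneous.sum _ _ _ fun v _ => by
    simpa using (isHomogeneous_C σ (m v)).mul (isHomogeneous_X R v)

theorem MvPolynomial.coeff_sum_C_mul_X [DecidableEq σ] (m : σ → R) (ν : σ →₀ ℕ) :
    coeff ν (∑ v, C (m v) * X v) = ∑ v, if Finsupp.single v 1 = ν then m v else 0 := by
  simp only [coeff_sum, coeff_C_mul, coeff_X, mul_ite, mul_one, mul_zero]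

end LinearForms

theorem exists_forall_sum_mul_ne {σ ι R : Type*} [Fintype σ] [DecidableEq σ] [CommRing R]
    [LinearOrder R] [IsStrictOrderedRing R]
    (s : Finset ι) (m : ι → σ → R) (hm : ∀ i ∈ s, ∀ v, 0 ≤ m i v)
    (head : ι → σ) (hhead : ∀ i ∈ s, 0 < m i (head i)) (c : ι → R) (S : σ → Finset R)
    (hS : ∀ v, #{i ∈ s | head i = v} < #(S v)) :
    ∃ t : σ → R, (∀ v, t v ∈ S v) ∧ ∀ i ∈ s, ∑ v, m i v * t v ≠ c i := by
  classical
  set L : ι → MvPolynomial σ R := fun i => ∑ v, C (m i v) * X v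
  set μ : σ →₀ ℕ := ∑ i ∈ s, Finsupp.single (head i) 1
  set P := ∏ i ∈ s, (L i + C (-c i))
  have hμ_degree : μ.degree = #s := by simp [μ, map_sum, Finsupp.degree_single]
  have hμ_apply : ∀ v, μ v = #{i ∈ s | head i = v} := by
    intro v
    simp [μ, Finsupp.finsetSum_apply, Finsupp.single_apply]
  have hL_nonneg : ∀ i ∈ s, ∀ ν, 0 ≤ coeff ν (L i) := fun i hi ν => by
    rw [coeff_sum_C_mul_X]
    exact sum_nonneg fun v _ => by split_ifs <;> simp [hm i hi v]
  have hL_head : ∀ i, coeff (Finsupp.single (head i) 1) (L i) = m i (head i) := fun i => by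
    simp [L, coeff_sum_C_mul_X, Finsupp.single_left_inj]
  have hP_coeff : coeff μ P ≠ 0 := by
    rw [coeff_prod_add_C_of_isHomogeneous s L (fun i _ => isHomogeneous_sum_C_mul_X _) _ hμ_degree]
    refine (lt_of_lt_of_le ?_ (prod_coeff_le_coeff_prod s L _ hL_nonneg)).ne'
    exact prod_pos fun i hi => (hL_head i).symm ▸ hhead i hi
  have hP_degree : P.totalDegree = μ.degree := by
    refine le_antisymm ?_ (le_totalDegree (mem_support_iff.mpr hP_coeff))
    refine (totalDegree_finsetProd _ _).trans ?_
    rw [hμ_degree, card_eq_sum_ones]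
    refine sum_le_sum fun i _ => (totalDegree_add _ _).trans ?_
    rw [totalDegree_C, Nat.max_zero]
    exact (isHomogeneous_sum_C_mul_X _).totalDegree_le
  obtain ⟨t, htS, hPt⟩ := combinatorial_nullstellensatz_exists_eval_nonzero P μ hP_coeff
    hP_degree S fun v => hμ_apply v ▸ hS v
  refine ⟨t, htS, fun i hi => sub_ne_zero.mp ?_⟩
  rw [map_prod] at hPt
  simpa [L, sub_eq_add_neg] using prod_ne_zero_iff.mp hPt i hi

theorem nsum_eq_sum_neighborFinset {V M : Type*} [Fintype V] [AddCommMonoid M]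
    (G : SimpleGraph V) [DecidableRel G.Adj] (f : V → M) (u : V) :
    nsum G f u = ∑ x ∈ G.neighborFinset u, f x := by
  unfold nsum
  congr!

theorem hasAddColoring_of_int {V : Type*} [Fintype V] (G : SimpleGraph V) [DecidableRel G.Adj]
    {k : ℕ} (f : V → ℤ) (hf : ∀ v, f v ∈ Icc 1 (k : ℤ))
    (hne : ∀ ⦃u v⦄, G.Adj u v → ∑ x ∈ G.neighborFinset u, f x ≠ ∑ x ∈ G.neighborFinset v, f x) :
    HasAddColoring G k := by
  have hf' : ∀ v, 1 ≤ f v ∧ f v ≤ k := fun v => mem_Icc.mp (hf v)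
  have hcast : ∀ v, ((f v).toNat : ℤ) = f v := fun v => Int.toNat_of_nonneg (by linarith [hf' v])
  refine ⟨fun v => (f v).toNat, fun v => ?_, ?_⟩
  · have := hf' v
    simp only [mem_Icc]
    omega
  intro u v huv heq
  apply hne huv
  simpa [nsum_eq_sum_neighborFinset, hcast] using congrArg (Nat.cast : ℕ → ℤ) heq

section Coloring

variable {V : Type*} [DecidableEq V] (A B C : Finset V) (t h : V → ℤ)

def threePartColoring (x : V) : ℤ :=
  (if x ∈ A then 12 * (4 - t x) else 0) + (if x ∈ B then 12 * t x else 0) +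
    (if x ∈ C then h x else 0)

theorem sum_threePartColoring (s : Finset V) :
    ∑ x ∈ s, threePartColoring A B C t h x =
      ∑ x ∈ s with x ∈ A, 12 * (4 - t x) + ∑ x ∈ s with x ∈ B, 12 * t x +
        ∑ x ∈ s with x ∈ C, h x := by
  simp only [threePartColoring, sum_add_distrib, sum_filter]

theorem dvd_sum_threePartColoring_sub (s : Finset V) :
    12 ∣ ∑ x ∈ s, threePartColoring A B C t h x - ∑ x ∈ s with x ∈ C, h x := by
  rw [sum_threePartColoring, add_sub_cancel_right]
  exact dvd_add (dvd_sum fun _ _ => dvd_mul_right _ _) (dvd_sum fun _ _ => dvd_mul_right _ _)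

theorem threePartColoring_mem_Icc [Fintype V] (hcover : A ∪ B ∪ C = univ)
    (hAB : Disjoint A B) (hAC : Disjoint A C) (hBC : Disjoint B C)
    (ht : ∀ v, t v ∈ Icc 1 3) (hh : ∀ x ∈ C, h x ∈ Icc 1 12) (x : V) :
    threePartColoring A B C t h x ∈ Icc 1 36 := by
  have htx := mem_Icc.mp (ht x)
  have hx : x ∈ A ∪ B ∪ C := hcover ▸ mem_univ x
  rw [mem_union, mem_union] at hx
  rcases hx with (hx | hx) | hx <;> rw [mem_Icc]
  · simp only [threePartColoring, hx, disjoint_left.mp hAB hx, disjoint_left.mp hAC hx,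
      if_true, if_false]
    omega
  · simp only [threePartColoring, hx, disjoint_right.mp hAB hx, disjoint_left.mp hBC hx,
      if_true, if_false]
    omega
  · simp only [threePartColoring, hx, disjoint_right.mp hAC hx, disjoint_right.mp hBC hx,
      if_true, if_false]
    have := mem_Icc.mp (hh x hx)
    omega

end Coloring

section ThreeParts

variable {V : Type*} [Fintype V] [DecidableEq V] (G : SimpleGraph V) [DecidableRel G.Adj]

theorem card_filter_ori_eq_le (A B : Finset V) (hAB : Disjoint A B)
    (ori : Sym2 V → V) (hori : ∀ e ∈ G.edgeSet, ori e ∈ e) {k : ℕ}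
    (hindeg : ∀ v ∈ A ∪ B, #{u ∈ G.neighborFinset v | u ∈ A ∪ B ∧ ori s(u, v) = v} ≤ k)
    (v : V) : #{p ∈ {p ∈ A ×ˢ B | G.Adj p.1 p.2} | ori s(p.1, p.2) = v} ≤ k := by
  set indeg := {u ∈ G.neighborFinset v | u ∈ A ∪ B ∧ ori s(u, v) = v}
  have key : ∀ p ∈ {p ∈ {p ∈ A ×ˢ B | G.Adj p.1 p.2} | ori s(p.1, p.2) = v},
      v ∈ A ∪ B ∧ p ∈ indeg.image fun u => if v ∈ A then (v, u) else (u, v) := by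
    rintro ⟨a, b⟩ hp
    simp only [mem_filter, mem_product] at hp
    obtain ⟨⟨⟨ha, hb⟩, hab⟩, hv⟩ := hp
    rcases Sym2.mem_iff.mp (hori _ hab) with h | h
    · obtain rfl : a = v := h.symm.trans hv
      refine ⟨mem_union_left _ ha, mem_image.mpr ⟨b, ?_, by simp [ha]⟩⟩
      simp [indeg, hab, hb, Sym2.eq_swap, h]
    · obtain rfl : b = v := h.symm.trans hv
      refine ⟨mem_union_right _ hb, mem_image.mpr ⟨a, ?_, by simp [disjoint_right.mp hAB hb]⟩⟩
      simp [indeg, hab.symm, ha, h]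
  rcases eq_empty_or_nonempty {p ∈ {p ∈ A ×ˢ B | G.Adj p.1 p.2} | ori s(p.1, p.2) = v}
    with hempty | ⟨p, hp⟩
  · simp [hempty]
  exact (card_le_card fun q hq => (key q hq).2).trans
    (card_image_le.trans (hindeg v (key p hp).1))

theorem exists_sums_ne_of_indegree_le (A B : Finset V) (hAB : Disjoint A B)
    (ori : Sym2 V → V) (hori : ∀ e ∈ G.edgeSet, ori e ∈ e) {k : ℕ}
    (hindeg : ∀ v ∈ A ∪ B, #{u ∈ G.neighborFinset v | u ∈ A ∪ B ∧ ori s(u, v) = v} ≤ k)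
    (c : V → V → ℤ) :
    ∃ t : V → ℤ, (∀ v, t v ∈ Icc 1 (k + 1 : ℤ)) ∧ ∀ a ∈ A, ∀ b ∈ B, G.Adj a b →
      ∑ x ∈ G.neighborFinset a with x ∈ B, t x + ∑ x ∈ G.neighborFinset b with x ∈ A, t x
        ≠ c a b := by
  let m : V × V → V → ℤ := fun p v =>
    (if G.Adj p.1 v ∧ v ∈ B then 1 else 0) + (if G.Adj p.2 v ∧ v ∈ A then 1 else 0)
  have hm : ∀ p, ∀ v, 0 ≤ m p v := fun p v => by positivity
  have hm_head : ∀ p ∈ {p ∈ A ×ˢ B | G.Adj p.1 p.2}, 0 < m p (ori s(p.1, p.2)) := by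
    intro p hp
    simp only [mem_filter, mem_product] at hp
    obtain ⟨⟨ha, hb⟩, hab⟩ := hp
    rcases Sym2.mem_iff.mp (hori _ hab) with h | h <;> rw [h]
    · have : G.Adj p.2 p.1 ∧ p.1 ∈ A := ⟨hab.symm, ha⟩
      simp only [m, this, and_self, if_true]
      split_ifs <;> norm_num
    · have : G.Adj p.1 p.2 ∧ p.2 ∈ B := ⟨hab, hb⟩
      simp only [m, this, and_self, if_true]
      split_ifs <;> norm_num
  obtain ⟨t, ht, hne⟩ := exists_forall_sum_mul_ne {p ∈ A ×ˢ B | G.Adj p.1 p.2} m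
    (fun p _ => hm p) (fun p => ori s(p.1, p.2)) hm_head (fun p => c p.1 p.2)
    (fun _ => Icc 1 (k + 1 : ℤ))
    fun v => (card_filter_ori_eq_le G A B hAB ori hori hindeg v).trans_lt (by simp)
  refine ⟨t, ht, fun a ha b hb hab => ?_⟩
  convert hne (a, b) (by simp [ha, hb, hab]) using 1
  simp only [m, add_mul, sum_add_distrib, ite_mul, one_mul, zero_mul, ← sum_filter,
    SimpleGraph.neighborFinset_eq_filter, filter_filter]


variable {A B C : Finset V} (t h : V → ℤ)

theorem sum_threePartColoring_ne_of_mem_C (hindC : ∀ u ∈ C, ∀ v ∈ C, ¬G.Adj u v)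
    {u x : V} (hu : ¬12 ∣ ∑ y ∈ G.neighborFinset u with y ∈ C, h y) (hx : x ∈ C) :
    ∑ y ∈ G.neighborFinset u, threePartColoring A B C t h y ≠
      ∑ y ∈ G.neighborFinset x, threePartColoring A B C t h y := by
  have hx_empty : {y ∈ G.neighborFinset x | y ∈ C} = ∅ :=
    filter_eq_empty_iff.mpr fun y hy hyC => hindC x hx y hyC (G.mem_neighborFinset x y |>.mp hy)
  have hdvd_u := dvd_sum_threePartColoring_sub A B C t h (G.neighborFinset u)
  have hdvd_x := dvd_sum_threePartColoring_sub A B C t h (G.neighborFinset x)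
  rw [hx_empty, sum_empty] at hdvd_x
  omega

theorem sum_threePartColoring_ne_of_mem_A_of_mem_B
    (hindA : ∀ u ∈ A, ∀ v ∈ A, ¬G.Adj u v) (hindB : ∀ u ∈ B, ∀ v ∈ B, ¬G.Adj u v)
    {a b : V} (ha : a ∈ A) (hb : b ∈ B)
    (ht : ∑ x ∈ G.neighborFinset a with x ∈ B, t x + ∑ x ∈ G.neighborFinset b with x ∈ A, t x ≠
      4 * #{x ∈ G.neighborFinset b | x ∈ A} +
        (∑ x ∈ G.neighborFinset b with x ∈ C, h x -
          ∑ x ∈ G.neighborFinset a with x ∈ C, h x) / 12) :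
    ∑ y ∈ G.neighborFinset a, threePartColoring A B C t h y ≠
      ∑ y ∈ G.neighborFinset b, threePartColoring A B C t h y := by
  have ha_empty : {y ∈ G.neighborFinset a | y ∈ A} = ∅ :=
    filter_eq_empty_iff.mpr fun y hy hyA => hindA a ha y hyA (G.mem_neighborFinset a y |>.mp hy)
  have hb_empty : {y ∈ G.neighborFinset b | y ∈ B} = ∅ :=
    filter_eq_empty_iff.mpr fun y hy hyB => hindB b hb y hyB (G.mem_neighborFinset b y |>.mp hy)
  rw [sum_threePartColoring, sum_threePartColoring, ha_empty, hb_empty, sum_empty, sum_empty,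
    ← mul_sum, ← mul_sum, sum_sub_distrib, sum_const, nsmul_eq_mul]
  omega

theorem sum_threePartColoring_ne (hcover : A ∪ B ∪ C = univ)
    (hindA : ∀ u ∈ A, ∀ v ∈ A, ¬G.Adj u v) (hindB : ∀ u ∈ B, ∀ v ∈ B, ¬G.Adj u v)
    (hindC : ∀ u ∈ C, ∀ v ∈ C, ¬G.Adj u v)
    (hh : ∀ u ∈ A ∪ B, (∃ x ∈ C, G.Adj u x) → ¬12 ∣ ∑ y ∈ G.neighborFinset u with y ∈ C, h y)
    (ht : ∀ a ∈ A, ∀ b ∈ B, G.Adj a b →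
      ∑ x ∈ G.neighborFinset a with x ∈ B, t x + ∑ x ∈ G.neighborFinset b with x ∈ A, t x ≠
        4 * #{x ∈ G.neighborFinset b | x ∈ A} +
          (∑ x ∈ G.neighborFinset b with x ∈ C, h x -
            ∑ x ∈ G.neighborFinset a with x ∈ C, h x) / 12)
    ⦃u v : V⦄ (huv : G.Adj u v) :
    ∑ y ∈ G.neighborFinset u, threePartColoring A B C t h y ≠
      ∑ y ∈ G.neighborFinset v, threePartColoring A B C t h y := by
  let S w := ∑ y ∈ G.neighborFinset w, threePartColoring A B C t h y
  have hC : ∀ {u x}, u ∈ A ∪ B → x ∈ C → G.Adj u x → S u ≠ S x := fun hu hx hux =>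
    sum_threePartColoring_ne_of_mem_C G t h hindC (hh _ hu ⟨_, hx, hux⟩) hx
  have hAB : ∀ {a b}, a ∈ A → b ∈ B → G.Adj a b → S a ≠ S b := fun ha hb hab =>
    sum_threePartColoring_ne_of_mem_A_of_mem_B G t h hindA hindB ha hb (ht _ ha _ hb hab)
  have hu : u ∈ A ∪ B ∪ C := hcover ▸ mem_univ u
  have hv : v ∈ A ∪ B ∪ C := hcover ▸ mem_univ v
  rw [mem_union, mem_union] at hu hv
  rcases hu with (hu | hu) | hu <;> rcases hv with (hv | hv) | hv
  · exact absurd huv (hindA u hu v hv)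
  · exact hAB hu hv huv
  · exact hC (mem_union_left _ hu) hv huv
  · exact (hAB hv hu huv.symm).symm
  · exact absurd huv (hindB u hu v hv)
  · exact hC (mem_union_right _ hu) hv huv
  · exact (hC (mem_union_left _ hv) hu huv.symm).symm
  · exact (hC (mem_union_right _ hv) hu huv.symm).symm
  · exact absurd huv (hindC u hu v hv)

end ThreeParts

/-- Let the vertex set of a finite simple graph `G` be partitioned into three
independent sets `A`, `B`, `C`. Suppose (i) there is `h : C → {1, …, 12}` such that
every vertex of `A ∪ B` with a neighbor in `C` has neighborhood sum over `C` not
divisible by `12`, and (ii) the bipartite subgraph of `G` induced on `A ∪ B` has an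
orientation with all indegrees at most `2`. Then `η(G) ≤ 36`. -/
theorem additive_coloring_three_parts
    {V : Type*} [Fintype V] [DecidableEq V] (G : SimpleGraph V) [DecidableRel G.Adj]
    (A B C : Finset V)
    (hcover : A ∪ B ∪ C = Finset.univ)
    (hAB : Disjoint A B) (hAC : Disjoint A C) (hBC : Disjoint B C)
    (hindA : ∀ u ∈ A, ∀ v ∈ A, ¬G.Adj u v)
    (hindB : ∀ u ∈ B, ∀ v ∈ B, ¬G.Adj u v)
    (hindC : ∀ u ∈ C, ∀ v ∈ C, ¬G.Adj u v)
    (hh : ∃ h : V → ℕ, (∀ x ∈ C, h x ∈ Finset.Icc 1 12) ∧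
      ∀ u ∈ A ∪ B, (∃ x ∈ C, G.Adj u x) →
        ¬(12 ∣ ∑ x ∈ (G.neighborFinset u).filter (· ∈ C), h x))
    (hor : ∃ ori : Sym2 V → V, (∀ e ∈ G.edgeSet, ori e ∈ e) ∧
      ∀ v ∈ A ∪ B,
        ((G.neighborFinset v).filter fun u => u ∈ A ∪ B ∧ ori s(u, v) = v).card ≤ 2) :
    eta G ≤ 36 := by
  obtain ⟨h, hh_range, hh_sum⟩ := hh
  obtain ⟨ori, hori, hindeg⟩ := hor
  let hZ : V → ℤ := fun x => h x
  let σ : V → ℤ := fun u => ∑ x ∈ G.neighborFinset u with x ∈ C, hZ x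
  obtain ⟨t, ht, ht_ne⟩ := exists_sums_ne_of_indegree_le G A B hAB ori hori hindeg
    fun a b => 4 * #{x ∈ G.neighborFinset b | x ∈ A} + (σ b - σ a) / 12
  refine Nat.sInf_le (hasAddColoring_of_int G (threePartColoring A B C t hZ)
    (threePartColoring_mem_Icc A B C t hZ hcover hAB hAC hBC ht fun x hx => ?_)
    (sum_threePartColoring_ne G t hZ hcover hindA hindB hindC (fun u hu hC => ?_) ht_ne))
  · simpa [hZ] using hh_range x hx
  · simpa [hZ] using (Int.natCast_dvd_natCast.not.mpr (hh_sum u hu hC))
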